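/- Let M := R̂ + [α(𝔥),R̂] + [α(𝔥),[α(𝔥),R̂]] + ⋯ be the smallest linear subspace of 𝔭 that contains R̂ and satisfies [α(X), M] ⊆ M for every X ∈ 𝔥. Then M is closed under the Lie bracket of 𝔭, i.e. M is a Lie subalgebra of 𝔭. (This is the algebraic core of H.C. Wang's description of the holonomy Lie algebra of an invariant principal connection: the 𝔥-module generated by the span of the curvature is already a Lie subalgebra.) -/
import Mathlib


/-- **Wang's holonomy algebra is a Lie subalgebra.**
Let `𝔥`, `𝔭` be real Lie algebras and `α : 𝔥 → 𝔭` a linear map, with curvature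
`ρ(X,Y) = ⁅α X, α Y⁆ - α ⁅X,Y⁆` and `R̂` the span of the image of `ρ`.
If `M` is the smallest linear subspace of `𝔭` containing `R̂` and satisfying
`⁅α X, M⁆ ⊆ M` for all `X ∈ 𝔥`, then `M` is closed under the Lie bracket of `𝔭`,
i.e. `M` is a Lie subalgebra of `𝔭`. -/
theorem wang_holonomy_is_lie_subalgebra
    (𝔥 𝔭 : Type*) [LieRing 𝔥] [LieAlgebra ℝ 𝔥] [LieRing 𝔭] [LieAlgebra ℝ 𝔭]
    (α : 𝔥 →ₗ[ℝ] 𝔭)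
    (Rhat : Submodule ℝ 𝔭)
    (hRhat : Rhat = Submodule.span ℝ {w : 𝔭 | ∃ X Y : 𝔥, w = ⁅α X, α Y⁆ - α ⁅X, Y⁆})
    (M : Submodule ℝ 𝔭)
    (hRM : Rhat ≤ M)
    (hMinv : ∀ X : 𝔥, ∀ m ∈ M, ⁅α X, m⁆ ∈ M)
    (hMmin : ∀ N : Submodule ℝ 𝔭, Rhat ≤ N → (∀ X : 𝔥, ∀ m ∈ N, ⁅α X, m⁆ ∈ N) → M ≤ N) :
    ∀ a ∈ M, ∀ b ∈ M, ⁅a, b⁆ ∈ M := by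
  set N : Submodule ℝ 𝔭 :=
    { carrier := {a | a ∈ M ∧ ∀ b ∈ M, ⁅a, b⁆ ∈ M}
      add_mem' := by
        rintro x y ⟨hx, hx2⟩ ⟨hy, hy2⟩
        exact ⟨M.add_mem hx hy, fun b hb => by
          rw [add_lie]; exact M.add_mem (hx2 b hb) (hy2 b hb)⟩
      zero_mem' := ⟨M.zero_mem, fun b hb => by simp⟩
      smul_mem' := by
        rintro c x ⟨hx, hx2⟩
        exact ⟨M.smul_mem c hx, fun b hb => by
          rw [smul_lie]; exact M.smul_mem c (hx2 b hb)⟩ } with hNdef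
  have hRN : Rhat ≤ N := by
    rw [hRhat]
    apply Submodule.span_le.2
    rintro w ⟨X, Y, rfl⟩
    have hwM : (⁅α X, α Y⁆ - α ⁅X, Y⁆) ∈ M :=
      hRM (hRhat ▸ Submodule.subset_span ⟨X, Y, rfl⟩)
    refine ⟨hwM, fun b hb => ?_⟩
    have h1 : ⁅⁅α X, α Y⁆ - α ⁅X, Y⁆, b⁆
        = (⁅α X, ⁅α Y, b⁆⁆ - ⁅α Y, ⁅α X, b⁆⁆) - ⁅α ⁅X, Y⁆, b⁆ := by
      rw [sub_lie, lie_lie]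
    rw [h1]
    exact M.sub_mem
      (M.sub_mem (hMinv X _ (hMinv Y b hb)) (hMinv Y _ (hMinv X b hb)))
      (hMinv ⁅X, Y⁆ b hb)
  have hNinv : ∀ X : 𝔥, ∀ m ∈ N, ⁅α X, m⁆ ∈ N := by
    rintro X m ⟨hm, hm2⟩
    refine ⟨hMinv X m hm, fun b hb => ?_⟩
    have h2 : ⁅⁅α X, m⁆, b⁆ = ⁅α X, ⁅m, b⁆⁆ - ⁅m, ⁅α X, b⁆⁆ := lie_lie _ _ _
    rw [h2]
    exact M.sub_mem (hMinv X _ (hm2 b hb)) (hm2 _ (hMinv X b hb))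
  intro a ha b hb
  exact (hMmin N hRN hNinv ha).2 b hb
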